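/- Classical analogue of the paper's Lemma identifying representations with bounded spectrum: let G be a compact abelian topological group with Haar probability measure μ, A a unital C*-algebra, and F a finite set of pairwise distinct continuous characters of G. Let P(F, A) be the set of families (p_χ)_{χ ∈ F} of projections in A satisfying p_χ p_{χ'} = 0 for χ ≠ χ' and Σ_{χ ∈ F} p_χ = 1, with the topology induced from the norm on A^F, and let R_F be the set of norm-continuous representations U of G in A such that P_{χ'}(U) = 0 for every continuous character χ' of G not in F, with the supremum-norm topology from C(G, A). Then the map sending (p_χ)_{χ ∈ F} to the representation g ↦ Σ_{χ ∈ F} χ(g) p_χ is a homeomorphism from P(F, A) onto R_F. -/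

import Mathlib

/-!
The inverse of `p ↦ (g ↦ ∑ i, χ i g • p i)` is `U ↦ (P_{χ i}(U))_i`. Left invariance of Haar
measure gives `U(g) P_χ(U) = χ(g) P_χ(U)`, and with the orthogonality of characters this makes the
`P_χ(U)` pairwise orthogonal projections. The only nontrivial point is `∑ i, P_{χ i}(U) = 1`: a
character `φ` of the commutative C*-algebra generated by the range of `U` turns `φ ∘ U` into a
character `ψ` of `G` with `φ (P_χ(U)) = δ_{χ ψ}`; the vanishing hypothesis forces `ψ` into the
family, so `φ (∑ i, P_{χ i}(U)) = 1` for every `φ`, and the Gelfand transform is injective.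
-/

open MeasureTheory

/-- A continuous map `f : C(G, A)` "is a norm-continuous representation of `G` in `A`":
it is unitary-valued, unital and multiplicative. -/
def IsUnitaryRep {G : Type*} [Group G] [TopologicalSpace G]
    {A : Type*} [NormedRing A] [StarRing A] [CStarRing A] [NormedAlgebra ℂ A]
    [CompleteSpace A] [StarModule ℂ A] (f : C(G, A)) : Prop :=
  (∀ g : G, f g ∈ unitary A) ∧ f 1 = 1 ∧ ∀ g h : G, f (g * h) = f g * f h

namespace ContinuousMonoidHom

variable {G : Type*} [Group G] [TopologicalSpace G] [MeasurableSpace G] [MeasurableMul G]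
  {μ : Measure G} [μ.IsMulLeftInvariant]

theorem integral_coe_circle_eq_zero {ψ : ContinuousMonoidHom G Circle} (hψ : ψ ≠ 1) :
    ∫ g, (ψ g : ℂ) ∂μ = 0 := by
  obtain ⟨g₀, hg₀⟩ : ∃ g₀, ψ g₀ ≠ 1 := by
    by_contra! h
    exact hψ (ext h)
  have hinv : ∫ g, (ψ (g₀ * g) : ℂ) ∂μ = ∫ g, (ψ g : ℂ) ∂μ :=
    integral_mul_left_eq_self (fun g => (ψ g : ℂ)) g₀
  simp only [map_mul, Circle.coe_mul, integral_const_mul] at hinv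
  have : ((ψ g₀ : ℂ) - 1) * ∫ g, (ψ g : ℂ) ∂μ = 0 := by linear_combination hinv
  exact (mul_eq_zero.1 this).resolve_left (sub_ne_zero.2 (Circle.coe_eq_one.not.2 hg₀))

open scoped Classical in
theorem integral_inv_mul_circle [IsProbabilityMeasure μ] (χ₁ χ₂ : ContinuousMonoidHom G Circle) :
    ∫ g, (((χ₁ g)⁻¹ : Circle) : ℂ) * χ₂ g ∂μ = if χ₁ = χ₂ then 1 else 0 := by
  split_ifs with h
  · subst h
    simp
  · rw [← integral_coe_circle_eq_zero (μ := μ) (ψ := χ₁⁻¹ * χ₂) (by rwa [ne_eq, inv_mul_eq_one])]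
    rfl

end ContinuousMonoidHom

section SpectralProj

variable {G : Type*} [Group G] [TopologicalSpace G] [MeasurableSpace G]
  {E : Type*} [NormedAddCommGroup E] [NormedSpace ℂ E]

noncomputable def spectralProj (μ : Measure G) (f : C(G, E)) (χ : ContinuousMonoidHom G Circle) :
    E :=
  ∫ g, (((χ g)⁻¹ : Circle) : ℂ) • f g ∂μ

variable [CompactSpace G] (μ : Measure G)

theorem norm_spectralProj_le [IsProbabilityMeasure μ] (f : C(G, E))
    (χ : ContinuousMonoidHom G Circle) : ‖spectralProj μ f χ‖ ≤ ‖f‖ := by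
  simpa [spectralProj] using norm_integral_le_of_norm_le_const (μ := μ) (C := ‖f‖)
    (.of_forall fun g => by simpa [norm_smul, Circle.norm_coe] using f.norm_coe_le_norm g)

variable [BorelSpace G]

theorem integrable_circle_inv_smul [IsFiniteMeasure μ] (f : C(G, E))
    (χ : ContinuousMonoidHom G Circle) :
    Integrable (fun g => (((χ g)⁻¹ : Circle) : ℂ) • f g) μ :=
  Continuous.integrable_of_hasCompactSupport (by fun_prop) (.of_compactSpace _)

theorem ContinuousLinearMap.map_spectralProj [IsFiniteMeasure μ] [CompleteSpace E] {F : Type*}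
    [NormedAddCommGroup F] [NormedSpace ℂ F] [CompleteSpace F] (L : E →L[ℂ] F) (f : C(G, E))
    (χ : ContinuousMonoidHom G Circle) :
    L (spectralProj μ f χ) = ∫ g, (((χ g)⁻¹ : Circle) : ℂ) • L (f g) ∂μ := by
  simp only [spectralProj, ← L.integral_comp_comm (integrable_circle_inv_smul μ f χ), map_smul]

theorem spectralProj_sub [IsFiniteMeasure μ] (f f' : C(G, E)) (χ : ContinuousMonoidHom G Circle) :
    spectralProj μ (f - f') χ = spectralProj μ f χ - spectralProj μ f' χ := by
  simp only [spectralProj, ContinuousMap.sub_apply, smul_sub,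
    integral_sub (integrable_circle_inv_smul μ f χ) (integrable_circle_inv_smul μ f' χ)]

theorem lipschitzWith_one_spectralProj [IsProbabilityMeasure μ]
    (χ : ContinuousMonoidHom G Circle) : LipschitzWith 1 (spectralProj (E := E) μ · χ) :=
  LipschitzWith.of_dist_le_mul fun f f' => by
    simpa [dist_eq_norm, spectralProj_sub] using norm_spectralProj_le μ (f - f') χ

end SpectralProj

theorem sum_smul_mul_sum_smul {ι R A : Type*} [Fintype ι] [CommSemiring R] [Semiring A]
    [Algebra R A] {p : ι → A} (hidem : ∀ i, IsIdempotentElem (p i))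
    (horth : ∀ i j, i ≠ j → p i * p j = 0) (c d : ι → R) :
    (∑ i, c i • p i) * (∑ j, d j • p j) = ∑ i, (c i * d i) • p i := by
  classical
  rw [Finset.sum_mul_sum]
  refine Finset.sum_congr rfl fun i _ => ?_
  rw [Finset.sum_eq_single i (fun j _ hj => by rw [smul_mul_smul_comm, horth i j hj.symm,
    smul_zero]) (by simp), smul_mul_smul_comm, hidem i]

section CharSum

variable {G : Type*} [Group G] [TopologicalSpace G] {ι : Type*} [Fintype ι]

section NormedAlgebra

variable {A : Type*} [NormedRing A] [NormedAlgebra ℂ A]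

noncomputable def charSum (χ : ι → ContinuousMonoidHom G Circle) (p : ι → A) : C(G, A) where
  toFun g := ∑ i, (χ i g : ℂ) • p i

theorem charSum_apply (χ : ι → ContinuousMonoidHom G Circle) (p : ι → A) (g : G) :
    charSum χ p g = ∑ i, (χ i g : ℂ) • p i :=
  rfl

theorem continuous_charSum (χ : ι → ContinuousMonoidHom G Circle) :
    Continuous (charSum (A := A) χ) :=
  ContinuousMap.continuous_of_continuous_uncurry _ (by simp only [charSum_apply]; fun_prop)

variable [CompleteSpace A] [CompactSpace G] [MeasurableSpace G] [BorelSpace G] [MeasurableMul G]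
  {μ : Measure G} [μ.IsMulLeftInvariant] [IsProbabilityMeasure μ]
  {χ : ι → ContinuousMonoidHom G Circle}

open scoped Classical in
theorem spectralProj_charSum (p : ι → A) (χ' : ContinuousMonoidHom G Circle) :
    spectralProj μ (charSum χ p) χ' = ∑ i, (if χ' = χ i then (1 : ℂ) else 0) • p i := by
  simp only [spectralProj, charSum_apply, Finset.smul_sum, smul_smul]
  rw [integral_finsetSum _ fun i _ => ?_]
  · simp only [integral_smul_const, ContinuousMonoidHom.integral_inv_mul_circle]
  · exact Continuous.integrable_of_hasCompactSupport (by fun_prop) (.of_compactSpace _)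

theorem spectralProj_charSum_of_forall_ne (p : ι → A) {χ' : ContinuousMonoidHom G Circle}
    (h : ∀ i, χ' ≠ χ i) : spectralProj μ (charSum χ p) χ' = 0 := by
  simp [spectralProj_charSum, h]

theorem spectralProj_charSum_self (hχ : Function.Injective χ) (p : ι → A) (j : ι) :
    spectralProj μ (charSum χ p) (χ j) = p j := by
  rw [spectralProj_charSum, Finset.sum_eq_single j (fun i _ hi => by simp [hχ.ne hi.symm])
    (by simp)]
  simp

end NormedAlgebra

theorem isUnitaryRep_charSum {A : Type*} [CStarAlgebra A] (χ : ι → ContinuousMonoidHom G Circle)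
    {p : ι → A} (hsa : ∀ i, IsSelfAdjoint (p i)) (hidem : ∀ i, IsIdempotentElem (p i))
    (horth : ∀ i j, i ≠ j → p i * p j = 0) (hsum : ∑ i, p i = 1) :
    IsUnitaryRep (charSum χ p) := by
  have map_one : charSum χ p 1 = 1 := by simpa [charSum_apply] using hsum
  have map_mul (g h : G) : charSum χ p (g * h) = charSum χ p g * charSum χ p h := by
    simp only [charSum_apply, sum_smul_mul_sum_smul hidem horth, map_mul, Circle.coe_mul]
  have star_apply (g : G) : star (charSum χ p g) = charSum χ p g⁻¹ := by
    simp [charSum_apply, star_sum, star_smul, (hsa _).star_eq, ← Circle.coe_inv_eq_conj]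
  refine ⟨fun g => Unitary.mem_iff.2 ⟨?_, ?_⟩, map_one, map_mul⟩
  · rw [star_apply, ← map_mul, inv_mul_cancel, map_one]
  · rw [star_apply, ← map_mul, mul_inv_cancel, map_one]

end CharSum

namespace IsUnitaryRep

section Group

variable {G : Type*} [Group G] [TopologicalSpace G] {A : Type*} [CStarAlgebra A] {f : C(G, A)}

theorem star_apply (hf : IsUnitaryRep f) (g : G) : star (f g) = f g⁻¹ := by
  obtain ⟨hu, h1, hm⟩ := hf
  calc star (f g) = star (f g) * (f g * f g⁻¹) := by rw [← hm, mul_inv_cancel, h1, mul_one]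
    _ = f g⁻¹ := by rw [← mul_assoc, (Unitary.mem_iff.1 (hu g)).1, one_mul]

theorem exists_character {B : Type*} [CStarAlgebra B] {f : C(G, B)} (hf : IsUnitaryRep f)
    (φ : WeakDual.characterSpace ℂ B) :
    ∃ ψ : ContinuousMonoidHom G Circle, ∀ g, φ (f g) = ψ g :=
  ⟨{ toFun g := ⟨φ (f g), spectrum.subset_circle_of_unitary (hf.1 g)
        (WeakDual.CharacterSpace.apply_mem_spectrum φ _)⟩
     map_one' := by ext; simp [hf.2.1]
     map_mul' g h := by ext; simp [hf.2.2]; rfl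
     continuous_toFun := by fun_prop }, fun _ => rfl⟩

variable [CompactSpace G] [MeasurableSpace G] [BorelSpace G] [MeasurableMul G] {μ : Measure G}
  [μ.IsMulLeftInvariant]

theorem mul_spectralProj [IsFiniteMeasure μ] (hf : IsUnitaryRep f)
    (χ : ContinuousMonoidHom G Circle) (g : G) :
    f g * spectralProj μ f χ = (χ g : ℂ) • spectralProj μ f χ :=
  calc f g * spectralProj μ f χ = ∫ h, (((χ h)⁻¹ : Circle) : ℂ) • f (g * h) ∂μ := by
        rw [← ContinuousLinearMap.mul_apply' ℂ, ContinuousLinearMap.map_spectralProj]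
        simp [hf.2.2]
    _ = ∫ k, (((χ (g⁻¹ * k))⁻¹ : Circle) : ℂ) • f k ∂μ := by
        rw [← integral_mul_left_eq_self (fun k => (((χ (g⁻¹ * k))⁻¹ : Circle) : ℂ) • f k) g]
        simp
    _ = (χ g : ℂ) • spectralProj μ f χ := by
        rw [spectralProj, ← integral_smul]
        congr with k
        simp [smul_smul, mul_comm]

variable [IsProbabilityMeasure μ]

open scoped Classical in
theorem spectralProj_mul_spectralProj (hf : IsUnitaryRep f)
    (χ₁ χ₂ : ContinuousMonoidHom G Circle) :
    spectralProj μ f χ₁ * spectralProj μ f χ₂ =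
      (if χ₁ = χ₂ then (1 : ℂ) else 0) • spectralProj μ f χ₂ :=
  calc spectralProj μ f χ₁ * spectralProj μ f χ₂
      = ∫ g, ((((χ₁ g)⁻¹ : Circle) : ℂ) * χ₂ g) • spectralProj μ f χ₂ ∂μ := by
        rw [show spectralProj μ f χ₁ * spectralProj μ f χ₂ =
          (ContinuousLinearMap.mul ℂ A).flip (spectralProj μ f χ₂) (spectralProj μ f χ₁) from rfl,
          ContinuousLinearMap.map_spectralProj]
        simp [hf.mul_spectralProj, smul_smul]
    _ = (if χ₁ = χ₂ then (1 : ℂ) else 0) • spectralProj μ f χ₂ := by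
        rw [integral_smul_const, ContinuousMonoidHom.integral_inv_mul_circle]

theorem isIdempotentElem_spectralProj (hf : IsUnitaryRep f) (χ : ContinuousMonoidHom G Circle) :
    IsIdempotentElem (spectralProj μ f χ) := by
  simpa [IsIdempotentElem] using hf.spectralProj_mul_spectralProj χ χ

theorem spectralProj_mul_spectralProj_of_ne (hf : IsUnitaryRep f)
    {χ₁ χ₂ : ContinuousMonoidHom G Circle} (h : χ₁ ≠ χ₂) :
    spectralProj μ f χ₁ * spectralProj μ f χ₂ = 0 := by
  simpa [h] using hf.spectralProj_mul_spectralProj χ₁ χ₂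

theorem isSelfAdjoint_spectralProj (hf : IsUnitaryRep f) (χ : ContinuousMonoidHom G Circle) :
    IsSelfAdjoint (spectralProj μ f χ) := by
  set P := spectralProj μ f χ
  have star_mul_apply (g : G) : star P * f g = (χ g : ℂ) • star P := by
    simpa [hf.star_apply, ← Circle.coe_inv_eq_conj] using
      congrArg star (hf.mul_spectralProj χ g⁻¹)
  have star_mul_self : star P * P = star P := by
    rw [← ContinuousLinearMap.mul_apply' ℂ, ContinuousLinearMap.map_spectralProj]
    simp [star_mul_apply, smul_smul]
  have h := congrArg star star_mul_self
  rwa [star_mul, star_star, star_mul_self] at h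

variable {ι : Type*} [Fintype ι] {χ : ι → ContinuousMonoidHom G Circle}

theorem sum_spectralProj_eq_one_of_comm {B : Type*} [CommCStarAlgebra B] {f : C(G, B)}
    (hf : IsUnitaryRep f) (hχ : Function.Injective χ)
    (hvan : ∀ χ', (∀ i, χ' ≠ χ i) → spectralProj μ f χ' = 0) :
    ∑ i, spectralProj μ f (χ i) = 1 := by
  classical
  refine (gelfandTransform_bijective B).1 (ContinuousMap.ext fun φ => ?_)
  obtain ⟨ψ, hψ⟩ := hf.exists_character φ
  have hφ (χ' : ContinuousMonoidHom G Circle) :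
      φ (spectralProj μ f χ') = if χ' = ψ then 1 else 0 :=
    calc φ (spectralProj μ f χ') = ∫ g, (((χ' g)⁻¹ : Circle) : ℂ) • φ (f g) ∂μ :=
          (φ.1 : B →L[ℂ] ℂ).map_spectralProj μ f χ'
      _ = _ := by simp only [hψ, smul_eq_mul, ContinuousMonoidHom.integral_inv_mul_circle]
  obtain ⟨j, rfl⟩ : ∃ j, χ j = ψ := by
    by_contra! h
    simpa [hvan ψ fun i => (h i).symm] using hφ ψ
  simp [hφ, hχ.eq_iff]

end Group

section CommGroup

variable {G : Type*} [CommGroup G] [TopologicalSpace G] {A : Type*} [CStarAlgebra A] {f : C(G, A)}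

theorem exists_isClosed_starSubalgebra_mul_comm (hf : IsUnitaryRep f) :
    ∃ C : StarSubalgebra ℂ A, IsClosed (C : Set A) ∧ (∀ g, f g ∈ C) ∧
      ∀ x ∈ C, ∀ y ∈ C, x * y = y * x := by
  set S := StarAlgebra.adjoin ℂ (Set.range f)
  have hS : IsMulCommutative S := StarAlgebra.isMulCommutative_adjoin ℂ
    (by rintro _ ⟨g, rfl⟩ _ ⟨h, rfl⟩; rw [← hf.2.2, ← hf.2.2, mul_comm])
    (by rintro _ ⟨g, rfl⟩ _ ⟨h, rfl⟩; rw [hf.star_apply, ← hf.2.2, ← hf.2.2, mul_comm])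
  let := S.commRingTopologicalClosure fun x y => hS.is_comm.comm x y
  exact ⟨S.topologicalClosure, S.isClosed_topologicalClosure,
    fun g => S.le_topologicalClosure (StarAlgebra.subset_adjoin ℂ _ ⟨g, rfl⟩),
    fun x hx y hy => congrArg Subtype.val (mul_comm (⟨x, hx⟩ : S.topologicalClosure) ⟨y, hy⟩)⟩

variable [CompactSpace G] [MeasurableSpace G] [BorelSpace G] [MeasurableMul G] {μ : Measure G}
  [μ.IsMulLeftInvariant] [IsProbabilityMeasure μ] {ι : Type*} [Fintype ι]
  {χ : ι → ContinuousMonoidHom G Circle}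

theorem sum_spectralProj_eq_one (hf : IsUnitaryRep f) (hχ : Function.Injective χ)
    (hvan : ∀ χ', (∀ i, χ' ≠ χ i) → spectralProj μ f χ' = 0) :
    ∑ i, spectralProj μ f (χ i) = 1 := by
  obtain ⟨C, hC, hfC, hcomm⟩ := hf.exists_isClosed_starSubalgebra_mul_comm
  have : IsClosed (C : Set A) := hC
  let : CommCStarAlgebra C :=
    { StarSubalgebra.cstarAlgebra C with mul_comm x y := Subtype.ext (hcomm _ x.2 _ y.2) }
  let fC : C(G, C) := ⟨fun g => ⟨f g, hfC g⟩, by fun_prop⟩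
  have hfC_rep : IsUnitaryRep fC :=
    ⟨fun g => Unitary.mem_iff.2 ⟨Subtype.ext (Unitary.mem_iff.1 (hf.1 g)).1,
      Subtype.ext (Unitary.mem_iff.1 (hf.1 g)).2⟩, Subtype.ext hf.2.1,
      fun g h => Subtype.ext (hf.2.2 g h)⟩
  have hcoe (χ' : ContinuousMonoidHom G Circle) :
      ((spectralProj μ fC χ' : C) : A) = spectralProj μ f χ' :=
    (⟨C.subtype.toLinearMap, continuous_subtype_val⟩ : C →L[ℂ] A).map_spectralProj μ fC χ'
  have hsum := hfC_rep.sum_spectralProj_eq_one_of_comm hχ fun χ' h =>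
    Subtype.ext (by rw [hcoe, hvan χ' h]; rfl)
  simpa [hcoe] using congrArg Subtype.val hsum

theorem charSum_spectralProj (hf : IsUnitaryRep f) (hχ : Function.Injective χ)
    (hvan : ∀ χ', (∀ i, χ' ≠ χ i) → spectralProj μ f χ' = 0) :
    charSum χ (fun i => spectralProj μ f (χ i)) = f := by
  ext g
  calc charSum χ (fun i => spectralProj μ f (χ i)) g = f g * ∑ i, spectralProj μ f (χ i) := by
        simp [charSum_apply, Finset.mul_sum, hf.mul_spectralProj]
    _ = f g := by rw [hf.sum_spectralProj_eq_one hχ hvan, mul_one]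

end CommGroup

end IsUnitaryRep

theorem homeomorph_projection_families_reps_with_spectrum_in
    {G : Type*} [CommGroup G] [TopologicalSpace G] [IsTopologicalGroup G] [CompactSpace G]
    [MeasurableSpace G] [BorelSpace G]
    (μ : Measure G) [μ.IsHaarMeasure] [IsProbabilityMeasure μ]
    {A : Type*} [NormedRing A] [StarRing A] [CStarRing A] [NormedAlgebra ℂ A]
    [CompleteSpace A] [StarModule ℂ A]
    {ι : Type*} [Fintype ι] (χ : ι → ContinuousMonoidHom G Circle)
    (hχ : Function.Injective χ) :
    ∃ h : {p : ι → A //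
            (∀ i, IsSelfAdjoint (p i)) ∧ (∀ i, IsIdempotentElem (p i)) ∧
            (∀ i j, i ≠ j → p i * p j = 0) ∧ (∑ i, p i = 1)} ≃ₜ
          {f : C(G, A) // IsUnitaryRep f ∧
            ∀ χ' : ContinuousMonoidHom G Circle, (∀ i, χ' ≠ χ i) →
              (∫ g, (((χ' g)⁻¹ : Circle) : ℂ) • f g ∂μ) = 0},
      ∀ p g, ((h p : C(G, A)) g) = ∑ i, ((χ i g : ℂ)) • (p : ι → A) i := by
  let _ : CStarAlgebra A := {}
  refine ⟨
    { toFun p := ⟨charSum χ p, isUnitaryRep_charSum χ p.2.1 p.2.2.1 p.2.2.2.1 p.2.2.2.2,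
        fun _ => spectralProj_charSum_of_forall_ne p.1⟩
      invFun f := ⟨fun i => spectralProj μ f (χ i), fun i => f.2.1.isSelfAdjoint_spectralProj _,
        fun i => f.2.1.isIdempotentElem_spectralProj _,
        fun i j hij => f.2.1.spectralProj_mul_spectralProj_of_ne (hχ.ne hij),
        f.2.1.sum_spectralProj_eq_one hχ f.2.2⟩
      left_inv p := Subtype.ext (funext (spectralProj_charSum_self hχ p.1))
      right_inv f := Subtype.ext (f.2.1.charSum_spectralProj hχ f.2.2)
      continuous_toFun := .subtype_mk ((continuous_charSum χ).comp continuous_subtype_val) _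
      continuous_invFun := .subtype_mk (continuous_pi fun i =>
        (lipschitzWith_one_spectralProj μ (χ i)).continuous.comp continuous_subtype_val) _ },
    fun _ _ => rfl⟩
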